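/- Let G be a connected leafless graph, x a vertex of G, and e_1, …, e_d all the edges incident to x. Let G′ be the subgraph of G obtained by removing x and e_1, …, e_d, let G″ be the maximum subgraph of G′ in which every vertex has degree at least two, and set S = (E_G ∖ E_{G″}) ⊔ ⋃_{e ∈ E_G ∖ E_{G″}} ε_G(e). Then Aut(G)_{{x, e_1, …, e_d}} = Aut(G)_S. -/
import Mathlib


/-- A finite undirected multigraph (allowing loops and multiple edges) on a vertex type `V`
and an edge type `E`: the map `ends` assigns to each edge its unordered pair of endpoints
(a loop is an edge whose two endpoints coincide).  This is the same data as an incidence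
map `ε : E → 2^V` taking values in subsets of cardinality 1 or 2. -/
structure Multigraph (V E : Type) where
  ends : E → Sym2 V

namespace Multigraph

variable {V E : Type} (G : Multigraph V E)

/-- An automorphism of a multigraph: a pair of bijections on vertices and edges
commuting with the incidence map. -/
structure Aut (G : Multigraph V E) where
  toV : Equiv.Perm V
  toE : Equiv.Perm E
  ends_map : ∀ e, G.ends (toE e) = Sym2.map toV (G.ends e)

/-- Degree of the vertex `v` with respect to the edge set `F` (loops counted twice):
the number of edges of `F` incident to `v`, plus the number of loops of `F` at `v`. -/
noncomputable def degIn (F : Set E) (v : V) : ℕ :=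
  {e ∈ F | v ∈ G.ends e}.ncard + {e ∈ F | G.ends e = s(v, v)}.ncard

/-- Degree of a vertex (loops counted twice). -/
noncomputable def degree (v : V) : ℕ := G.degIn Set.univ v

/-- A graph is leafless if every vertex has degree at least two. -/
def Leafless : Prop := ∀ v, 2 ≤ G.degree v

/-- Adjacency: there is an edge with endpoints `u`, `v`. -/
def Adj (u v : V) : Prop := ∃ e, G.ends e = s(u, v)

/-- A graph is connected if it is nonempty and every two vertices are joined by a walk. -/
def Connected : Prop := Nonempty V ∧ ∀ u v : V, Relation.ReflTransGen G.Adj u v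

/-- Adjacency using only edges outside the edge set `F`. -/
def AdjOff (F : Set E) (u v : V) : Prop := ∃ e, e ∉ F ∧ G.ends e = s(u, v)

/-- Adjacency in the subgraph `G ∖ {x}` obtained by deleting the vertex `x`
and all edges incident to it. -/
def AdjOffV (x : V) (u v : V) : Prop := u ≠ x ∧ v ≠ x ∧ G.Adj u v

/-- An edge is a bridge if its endpoints are not joined by a walk avoiding it;
equivalently, its deletion increases the number of connected components. -/
def IsBridge (e : E) : Prop :=
  ∃ u v, G.ends e = s(u, v) ∧ ¬ Relation.ReflTransGen (G.AdjOff {e}) u v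

end Multigraph

section Aux
open Multigraph
variable {V E : Type}

mutual
  /-- `v` is deleted in forming the 2-core of `G ∖ x`. -/
  inductive DeadV (G : Multigraph V E) (x : V) : V → Prop where
    | base : DeadV G x x
    | step (v : V) (T : Set E) (hT : ∀ e ∈ T, DeadE G x e)
        (hdeg : G.degIn Tᶜ v ≤ 1) : DeadV G x v
  /-- `e` is deleted in forming the 2-core of `G ∖ x`. -/
  inductive DeadE (G : Multigraph V E) (x : V) : E → Prop where
    | mk (e : E) (v : V) (hv : v ∈ G.ends e) (hd : DeadV G x v) : DeadE G x e
end

variable [Fintype E] {G : Multigraph V E}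

lemma degIn_mono {F F' : Set E} (h : F ⊆ F') (v : V) : G.degIn F v ≤ G.degIn F' v :=
  Nat.add_le_add
    (Set.ncard_le_ncard (fun e he => ⟨h he.1, he.2⟩) (Set.toFinite _))
    (Set.ncard_le_ncard (fun e he => ⟨h he.1, he.2⟩) (Set.toFinite _))

lemma exists_edge_of_degIn_compl_le {T : Set E} {v : V}
    (h2 : 2 ≤ G.degree v) (h1 : G.degIn Tᶜ v ≤ 1) : ∃ e ∈ T, v ∈ G.ends e := by
  by_contra hc
  push_neg at hc
  have hsub : G.degree v ≤ G.degIn Tᶜ v := by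
    refine Nat.add_le_add (Set.ncard_le_ncard ?_ (Set.toFinite _))
      (Set.ncard_le_ncard ?_ (Set.toFinite _))
    · intro e he
      exact ⟨fun heT => hc e heT he.2, he.2⟩
    · intro e he
      have : v ∈ G.ends e := by rw [he.2]; exact Sym2.mem_mk_left _ _
      exact ⟨fun heT => hc e heT this, he.2⟩
  omega

lemma unique_edge_of_degIn_compl_le {T : Set E} {v : V} (h1 : G.degIn Tᶜ v ≤ 1)
    {e e' : E} (he : e ∉ T) (hev : v ∈ G.ends e) (he' : e' ∉ T) (he'v : v ∈ G.ends e') :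
    e = e' := by
  have hcard : {a ∈ Tᶜ | v ∈ G.ends a}.ncard ≤ 1 := by
    have := h1; unfold Multigraph.degIn at this; omega
  exact (Set.ncard_le_one (Set.toFinite _)).1 hcard e ⟨he, hev⟩ e' ⟨he', he'v⟩

lemma fix_other (f : G.Aut) {e : E} {v : V} (he : f.toE e = e)
    (hv : v ∈ G.ends e) (hfv : f.toV v = v) : ∀ u ∈ G.ends e, f.toV u = u := by
  obtain ⟨w, hw⟩ := Sym2.mem_iff_exists.1 hv
  have hmap : Sym2.map f.toV (G.ends e) = G.ends e := by
    rw [← f.ends_map, he]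
  rw [hw, Sym2.map_pair_eq, hfv] at hmap
  have hfw : f.toV w = w := by
    rcases Sym2.eq_iff.1 hmap with ⟨_, h2⟩ | ⟨h1, h2⟩
    · exact h2
    · rw [h2, h1]
  intro u hu
  rw [hw, Sym2.mem_iff] at hu
  rcases hu with rfl | rfl
  · exact hfv
  · exact hfw

/-- Key induction: an automorphism fixing `x` and its star fixes every dead edge
together with its endpoints. -/
lemma dead_fixed (hleaf : G.Leafless) {x : V} (f : G.Aut)
    (hx : f.toV x = x) (hstar : ∀ e, x ∈ G.ends e → f.toE e = e) :
    ∀ e, DeadE G x e → f.toE e = e ∧ ∀ u ∈ G.ends e, f.toV u = u := by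
  intro e hde
  refine DeadE.rec
    (motive_1 := fun v _ => ∀ e, v ∈ G.ends e → f.toE e = e ∧ ∀ u ∈ G.ends e, f.toV u = u)
    (motive_2 := fun e _ => f.toE e = e ∧ ∀ u ∈ G.ends e, f.toV u = u)
    ?_ ?_ ?_ hde
  case _ =>
    intro e hxe
    have hfe := hstar e hxe
    exact ⟨hfe, fix_other f hfe hxe hx⟩
  case _ =>
    intro v T hT hdeg IH
    intro e hve
    -- First: `f` fixes `v`.
    have hfv : f.toV v = v := by
      by_cases hvx : v = x
      · rw [hvx]; exact hx
      · obtain ⟨e', he'T, he'v⟩ := exists_edge_of_degIn_compl_le (hleaf v) hdeg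
        exact (IH e' he'T).2 v he'v
    by_cases heT : e ∈ T
    · exact IH e heT
    · -- `e` is the unique live edge at `v`, and `f e` is also live and at `v`.
      have hfeT : f.toE e ∉ T := by
        intro hmem
        have := (IH _ hmem).1
        exact heT (f.toE.injective this ▸ hmem)
      have hvfe : v ∈ G.ends (f.toE e) := by
        rw [f.ends_map]
        exact Sym2.mem_map.2 ⟨v, hve, hfv⟩
      have hfe : f.toE e = e := unique_edge_of_degIn_compl_le hdeg hfeT hvfe heT hve
      exact ⟨hfe, fix_other f hfe hve hfv⟩
  case _ =>
    intro e v hv hd IH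
    exact IH e hv

end Aux

/-- Let `G` be a connected leafless graph, `x` a vertex, and
`e₁, …, e_d` all the edges incident to `x`.  Let `G′` be the subgraph obtained by
removing `x` and `e₁, …, e_d` (its vertices are the `v ≠ x` and its edges the edges not
incident to `x`), and let `G″ = (W, F)` be the maximum subgraph of `G′` in which every
vertex has degree at least two (`W` its vertex set, `F` its edge set).  Set
`S = (E_G ∖ F) ⊔ ⋃_{e ∈ E_G ∖ F} ε_G(e)`.  Then the automorphisms fixing `x` and each
`eᵢ` are exactly the automorphisms fixing every element of `S`. -/
theorem aut_fixing_star_eq_aut_fixing_complement_of_core {V E : Type} [Fintype V] [Fintype E]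
    (G : Multigraph V E)
    (hconn : G.Connected) (hleaf : G.Leafless) (x : V)
    (W : Set V) (F : Set E)
    -- `(W, F)` is a subgraph of `G′ = G ∖ {x}` …
    (hFsub : ∀ e ∈ F, x ∉ G.ends e)
    (hWsub : ∀ v ∈ W, v ≠ x)
    (hclosed : ∀ e ∈ F, ∀ v ∈ G.ends e, v ∈ W)
    -- … in which every vertex has degree at least two, …
    (hdeg : ∀ v ∈ W, 2 ≤ G.degIn F v)
    -- … and it is the maximum such subgraph.
    (hmax : ∀ (W' : Set V) (F' : Set E),
      (∀ e ∈ F', x ∉ G.ends e) → (∀ v ∈ W', v ≠ x) →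
      (∀ e ∈ F', ∀ v ∈ G.ends e, v ∈ W') → (∀ v ∈ W', 2 ≤ G.degIn F' v) →
      W' ⊆ W ∧ F' ⊆ F) :
    {f : G.Aut | f.toV x = x ∧ ∀ e, x ∈ G.ends e → f.toE e = e} =
      {f : G.Aut | (∀ e, e ∉ F → f.toE e = e) ∧
        ∀ v, (∃ e, e ∉ F ∧ v ∈ G.ends e) → f.toV v = v} := by
  ext f
  simp only [Set.mem_setOf_eq]
  constructor
  · rintro ⟨hx, hstar⟩
    have hvalid := hmax {v | ¬ DeadV G x v} {e | ¬ DeadE G x e} ?_ ?_ ?_ ?_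
    · have hdead : ∀ e, e ∉ F → DeadE G x e := by
        intro e he
        by_contra hc
        exact he (hvalid.2 hc)
      refine ⟨fun e he => (dead_fixed hleaf f hx hstar e (hdead e he)).1,
        fun v hv => ?_⟩
      obtain ⟨e, heF, hve⟩ := hv
      exact (dead_fixed hleaf f hx hstar e (hdead e heF)).2 v hve
    · intro e he hxe
      exact he (DeadE.mk e x hxe DeadV.base)
    · intro v hv hvx
      exact hv (hvx ▸ DeadV.base)
    · intro e he v hv hdv
      exact he (DeadE.mk e v hv hdv)
    · intro v hv
      by_contra hlt
      push_neg at hlt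
      exact hv (DeadV.step v {e | DeadE G x e} (fun e he => he)
        (Nat.lt_succ_iff.mp hlt))
  · rintro ⟨h1, h2⟩
    have hex : ∃ e, x ∈ G.ends e := by
      by_contra hc
      push_neg at hc
      have hd : G.degree x = 0 := by
        unfold Multigraph.degree Multigraph.degIn
        have hA : {e ∈ (Set.univ : Set E) | x ∈ G.ends e} = ∅ := by
          ext e
          simp [hc e]
        have hB : {e ∈ (Set.univ : Set E) | G.ends e = s(x, x)} = ∅ := by
          ext e
          simp only [Set.mem_sep_iff, Set.mem_univ, true_and, Set.mem_empty_iff_false,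
            iff_false]
          intro h
          exact hc e (h ▸ Sym2.mem_mk_left x x)
        rw [hA, hB]; simp
      have := hleaf x
      omega
    obtain ⟨e0, he0⟩ := hex
    have he0F : e0 ∉ F := fun h => hFsub e0 h he0
    exact ⟨h2 x ⟨e0, he0F, he0⟩, fun e hxe => h1 e (fun h => hFsub e h hxe)⟩
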